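/- If D ↠* E then dist(D, E) ≤ 2·liv(D): the L¹ distance between the mathematical distributions of D and E is bounded by twice the liveness of D. -/

import Mathlib

open Relation
open scoped NNReal

abbrev PDist (A : Type) := List (ℝ≥0 × A)

namespace PPARS

variable {A X : Type}

/-- Total weight of a list distribution. -/
def weight (D : PDist A) : ℝ≥0 := (D.map Prod.fst).sum

/-- Scale every weight of a distribution by `α`. -/
def scale (α : ℝ≥0) (D : PDist A) : PDist A := D.map (fun pa => (α * pa.1, pa.2))

open Classical in
/-- Total weight that `D` assigns to the element `a`. -/
noncomputable def wt (D : PDist A) (a : A) : ℝ≥0 :=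
  (D.map (fun pa => if pa.2 = a then pa.1 else 0)).sum

/-- The Flip rule, closed under list contexts. -/
inductive FlipS : PDist A → PDist A → Prop
  | mk (E₁ E₂ : PDist A) (p q : ℝ≥0) (a b : A) :
      FlipS (E₁ ++ [(p,a),(q,b)] ++ E₂) (E₁ ++ [(q,b),(p,a)] ++ E₂)

/-- The Join rule, closed under list contexts. -/
inductive JoinS : PDist A → PDist A → Prop
  | mk (E₁ E₂ : PDist A) (p q : ℝ≥0) (a : A) :
      JoinS (E₁ ++ [(p,a),(q,a)] ++ E₂) (E₁ ++ [(p+q,a)] ++ E₂)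

/-- The Split rule, closed under list contexts. -/
inductive SplitS : PDist A → PDist A → Prop
  | mk (E₁ E₂ : PDist A) (p q : ℝ≥0) (a : A) :
      SplitS (E₁ ++ [(p+q,a)] ++ E₂) (E₁ ++ [(p,a),(q,a)] ++ E₂)

/-- One `∼`-step: congruence closure of Flip, Join and Split. -/
def SimStep (D E : PDist A) : Prop := FlipS D E ∨ JoinS D E ∨ SplitS D E

/-- One Flip-or-Join step. -/
def FJ (D E : PDist A) : Prop := FlipS D E ∨ JoinS D E

/-- Distribution equivalence `≈`. -/
def DEquiv : PDist A → PDist A → Prop := ReflTransGen SimStep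

/-- Parallel evolution `⇒_P` for a PARS relation `R`. -/
inductive PEvol (R : A → PDist A → Prop) : PDist A → PDist A → Prop
  | nil : PEvol R [] []
  | keep {ds ds' : PDist A} (p : ℝ≥0) (a : A) :
      PEvol R ds ds' → PEvol R ((p,a) :: ds) ((p,a) :: ds')
  | evolve {a : A} {D ds ds' : PDist A} (p : ℝ≥0) :
      R a D → PEvol R ds ds' → PEvol R ((p,a) :: ds) (scale p D ++ ds')

/-- Proper parallel evolution `⇒_P¹`: at least one element evolves. -/
inductive PEvol1 (R : A → PDist A → Prop) : PDist A → PDist A → Prop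
  | evolve {a : A} {D ds ds' : PDist A} (p : ℝ≥0) :
      R a D → PEvol R ds ds' → PEvol1 R ((p,a) :: ds) (scale p D ++ ds')
  | keep {ds ds' : PDist A} (p : ℝ≥0) (a : A) :
      PEvol1 R ds ds' → PEvol1 R ((p,a) :: ds) ((p,a) :: ds')

/-- The determinisation relation `↠ = ⇒_P ∪ ≈`. -/
def Red (R : A → PDist A → Prop) (D E : PDist A) : Prop := PEvol R D E ∨ DEquiv D E

/-- `R` defines a PARS: successor distributions are normalised. -/
def IsPARS (R : A → PDist A → Prop) : Prop := ∀ a D, R a D → weight D = 1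

/-- A terminal element has no successor distribution. -/
def Terminal (R : A → PDist A → Prop) (a : A) : Prop := ∀ D, ¬ R a D

/-- A terminal distribution contains only terminal elements. -/
def TerminalD (R : A → PDist A → Prop) (D : PDist A) : Prop := ∀ pa ∈ D, Terminal R pa.2

/-- Classical confluence of a relation. -/
def Confluent (r : X → X → Prop) : Prop :=
  ∀ a b c, ReflTransGen r a b → ReflTransGen r a c →
    ∃ d, ReflTransGen r b d ∧ ReflTransGen r c d

/-- Raw (finite) computation trees. -/
inductive CTree (A : Type) where
  | leaf (a : A)
  | node (a : A) (cs : List (ℝ≥0 × CTree A))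

def CTree.root : CTree A → A
  | .leaf a => a
  | .node a _ => a

/-- `IsTree R t a`: `t` is a computation tree of the PARS `R` with root `a`. -/
inductive IsTree (R : A → PDist A → Prop) : CTree A → A → Prop
  | leaf (a : A) : IsTree R (.leaf a) a
  | node (a : A) (cs : List (ℝ≥0 × CTree A)) :
      R a (cs.map fun x => (x.1, x.2.root)) →
      (∀ x ∈ cs, IsTree R x.2 x.2.root) →
      IsTree R (.node a cs) a

mutual
/-- Support of a computation tree. -/
def supp : CTree A → PDist A
  | .leaf a => [(1, a)]
  | .node _ cs => suppL cs
def suppL : List (ℝ≥0 × CTree A) → PDist A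
  | [] => []
  | (p, t) :: ts => scale p (supp t) ++ suppL ts
end

/-- A tree is maximal when all its leaves are terminal elements. -/
inductive MaximalT (R : A → PDist A → Prop) : CTree A → Prop
  | leaf (a : A) : Terminal R a → MaximalT R (.leaf a)
  | node (a : A) (cs : List (ℝ≥0 × CTree A)) :
      (∀ x ∈ cs, MaximalT R x.2) → MaximalT R (.node a cs)

end PPARS


namespace PPARS
variable {A X : Type}

/-- `R` modulo `≈`: an equivalence step, then `r`, then an equivalence step. -/
def ModE (r : PDist A → PDist A → Prop) : PDist A → PDist A → Prop :=
  Relation.Comp DEquiv (Relation.Comp r DEquiv)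

/-- `n`-fold composition of a relation. -/
def npow (r : X → X → Prop) : ℕ → X → X → Prop
  | 0 => Eq
  | n+1 => Relation.Comp r (npow r n)

/-- A local relation on distributions. -/
def LocalRel (r : PDist A → PDist A → Prop) : Prop :=
  ∀ (α β : ℝ≥0) (D₁ D₂ E : PDist A), r (scale α D₁ ++ scale β D₂) E →
    ∃ E₁ E₂, E = scale α E₁ ++ scale β E₂ ∧ r D₁ E₁ ∧ r D₂ E₂

/-- A compositional relation on distributions. -/
def Compositional (r : PDist A → PDist A → Prop) : Prop :=
  ∀ (α β : ℝ≥0) (D₁ E₁ D₂ E₂ : PDist A), r D₁ E₁ → r D₂ E₂ →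
    r (scale α D₁ ++ scale β D₂) (scale α E₁ ++ scale β E₂)

/-- `(γ, δ)` closes `(α, β)` on `D`. -/
def Closes (γ δ α β : PDist A → PDist A → Prop) (D : PDist A) : Prop :=
  ∀ E F, α D E → β D F → ∃ C, γ E C ∧ δ F C

open Classical in
/-- Liveness: total weight assigned to non-terminal elements. -/
noncomputable def liv (R : A → PDist A → Prop) (D : PDist A) : ℝ≥0 :=
  (D.map (fun pa => if Terminal R pa.2 then 0 else pa.1)).sum

/-- L¹ distance between mathematical distributions. -/
noncomputable def fdist (f g : A → ℝ≥0) : ℝ := ∑' a : A, |(f a : ℝ) - (g a : ℝ)|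

/-- L¹ distance between the mathematical distributions induced by two list
distributions. -/
noncomputable def ldist (D E : PDist A) : ℝ := fdist (wt D) (wt E)

end PPARS


/-!
Along `↠` the total weight is preserved (successor distributions of a PARS are normalised and
`≈` only regroups weight), while the weight of each terminal element can only grow, since terminal
elements never evolve. So `|⟦D⟧ a - ⟦E⟧ a| = ⟦E⟧ a - ⟦D⟧ a` at terminal `a`, and
`|⟦D⟧ a - ⟦E⟧ a| ≤ (⟦E⟧ a - ⟦D⟧ a) + 2 ⟦D⟧ a` elsewhere; summing, the terms `⟦E⟧ a - ⟦D⟧ a`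
cancel by conservation of weight and what remains is `2 · liv D`.
-/

lemma Finset.sum_abs_sub_le_two_mul_sum_ite {ι : Type*} (S : Finset ι) (P : ι → Prop)
    [DecidablePred P] {f g : ι → ℝ} (hf : ∀ i, 0 ≤ f i) (hg : ∀ i, 0 ≤ g i)
    (hsum : ∑ i ∈ S, f i = ∑ i ∈ S, g i) (hP : ∀ i, P i → f i ≤ g i) :
    ∑ i ∈ S, |f i - g i| ≤ 2 * ∑ i ∈ S, if P i then 0 else f i := by
  have pointwise : ∀ i, |f i - g i| ≤ (g i - f i) + 2 * if P i then 0 else f i := by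
    intro i
    by_cases hi : P i
    · simp [hi, abs_of_nonpos (sub_nonpos.2 (hP i hi))]
    · simp only [hi, if_false, abs_le]
      constructor <;> linarith [hf i, hg i]
  calc ∑ i ∈ S, |f i - g i| ≤ ∑ i ∈ S, ((g i - f i) + 2 * if P i then 0 else f i) :=
        Finset.sum_le_sum fun i _ => pointwise i
    _ = 2 * ∑ i ∈ S, if P i then 0 else f i := by
        rw [Finset.sum_add_distrib, Finset.sum_sub_distrib, hsum, Finset.mul_sum]; ring

namespace PPARS

variable {A : Type}

section ListDistributions

lemma wt_nil (a : A) : wt ([] : PDist A) a = 0 := rfl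

open Classical in
lemma wt_cons (p : ℝ≥0) (b : A) (D : PDist A) (a : A) :
    wt ((p, b) :: D) a = (if b = a then p else 0) + wt D a := by
  simp [wt]

lemma wt_append (D E : PDist A) (a : A) : wt (D ++ E) a = wt D a + wt E a := by
  simp [wt]

lemma wt_eq_zero_of_notMem {D : PDist A} {a : A} (h : ∀ pa ∈ D, pa.2 ≠ a) : wt D a = 0 := by
  induction D with
  | nil => rfl
  | cons pa D ih =>
    rw [wt_cons, if_neg (h pa List.mem_cons_self), zero_add]
    exact ih fun qa hqa => h qa (List.mem_cons_of_mem _ hqa)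

lemma weight_nil : weight ([] : PDist A) = 0 := rfl

lemma weight_cons (p : ℝ≥0) (b : A) (D : PDist A) : weight ((p, b) :: D) = p + weight D := by
  simp [weight]

lemma weight_append (D E : PDist A) : weight (D ++ E) = weight D + weight E := by
  simp [weight]

lemma weight_scale (α : ℝ≥0) (D : PDist A) : weight (scale α D) = α * weight D := by
  simp [weight, scale, Function.comp_def, List.sum_map_mul_left]

lemma sum_mul_wt {D : PDist A} {S : Finset A} (hS : ∀ pa ∈ D, pa.2 ∈ S) (c : A → ℝ≥0) :
    ∑ a ∈ S, c a * wt D a = (D.map fun pa => c pa.2 * pa.1).sum := by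
  classical
  induction D with
  | nil => simp [wt_nil]
  | cons pa D ih =>
    obtain ⟨p, b⟩ := pa
    simp only [wt_cons, mul_add, mul_ite, mul_zero, Finset.sum_add_distrib,
      Finset.sum_ite_eq, if_pos (hS _ List.mem_cons_self),
      ih fun qa hqa => hS qa (List.mem_cons_of_mem _ hqa), List.map_cons, List.sum_cons]

lemma weight_eq_sum_wt {D : PDist A} {S : Finset A} (hS : ∀ pa ∈ D, pa.2 ∈ S) :
    weight D = ∑ a ∈ S, wt D a := by
  simpa [weight] using (sum_mul_wt hS 1).symm

open Classical in
lemma liv_eq_sum_wt (R : A → PDist A → Prop) {D : PDist A} {S : Finset A}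
    (hS : ∀ pa ∈ D, pa.2 ∈ S) :
    liv R D = ∑ a ∈ S, if Terminal R a then 0 else wt D a := by
  simpa [liv, ite_mul] using (sum_mul_wt hS fun a => if Terminal R a then 0 else 1).symm

lemma ldist_eq_sum {D E : PDist A} {S : Finset A} (hD : ∀ pa ∈ D, pa.2 ∈ S)
    (hE : ∀ pa ∈ E, pa.2 ∈ S) : ldist D E = ∑ a ∈ S, |(wt D a : ℝ) - wt E a| := by
  refine tsum_eq_sum fun a ha => ?_
  rw [wt_eq_zero_of_notMem fun pa hpa => ne_of_mem_of_not_mem (hD pa hpa) ha,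
    wt_eq_zero_of_notMem fun pa hpa => ne_of_mem_of_not_mem (hE pa hpa) ha]
  simp

end ListDistributions

section Invariants

variable {R : A → PDist A → Prop} {D E : PDist A}

lemma SimStep.wt_eq (h : SimStep D E) : wt D = wt E := by
  classical
  funext c
  rcases h with ⟨E₁, E₂, p, q, a, b⟩ | ⟨E₁, E₂, p, q, a⟩ | ⟨E₁, E₂, p, q, a⟩ <;>
    simp only [wt_append, wt_cons, wt_nil] <;> split_ifs <;> ring

lemma SimStep.weight_eq (h : SimStep D E) : weight D = weight E := by
  rcases h with ⟨E₁, E₂, p, q, a, b⟩ | ⟨E₁, E₂, p, q, a⟩ | ⟨E₁, E₂, p, q, a⟩ <;>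
    simp only [weight_append, weight_cons, weight_nil] <;> ring

lemma DEquiv.wt_eq (h : DEquiv D E) : wt D = wt E := by
  simpa [reflTransGen_eq_self] using h.lift wt fun _ _ => SimStep.wt_eq

lemma DEquiv.weight_eq (h : DEquiv D E) : weight D = weight E := by
  simpa [reflTransGen_eq_self] using h.lift weight fun _ _ => SimStep.weight_eq

lemma PEvol.weight_eq (hR : IsPARS R) (h : PEvol R D E) : weight D = weight E := by
  induction h with
  | nil => rfl
  | keep p a _ ih => rw [weight_cons, weight_cons, ih]
  | evolve p hr _ ih => rw [weight_cons, weight_append, weight_scale, hR _ _ hr, mul_one, ih]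

lemma PEvol.wt_le_of_terminal (h : PEvol R D E) {a : A} (ha : Terminal R a) :
    wt D a ≤ wt E a := by
  induction h with
  | nil => exact le_rfl
  | keep p b _ ih => rw [wt_cons, wt_cons]; gcongr
  | @evolve b D' _ _ p hr _ ih =>
    have hb : b ≠ a := by rintro rfl; exact ha D' hr
    rw [wt_cons, wt_append, if_neg hb, zero_add]
    exact ih.trans le_add_self

lemma Red.weight_eq (hR : IsPARS R) (h : Red R D E) : weight D = weight E :=
  h.elim (PEvol.weight_eq hR) DEquiv.weight_eq

lemma Red.wt_le_of_terminal (h : Red R D E) {a : A} (ha : Terminal R a) : wt D a ≤ wt E a :=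
  h.elim (PEvol.wt_le_of_terminal · ha) fun h => (congrFun h.wt_eq a).le

lemma weight_eq_of_reflTransGen_red (hR : IsPARS R) (h : ReflTransGen (Red R) D E) :
    weight D = weight E := by
  simpa [reflTransGen_eq_self] using h.lift weight fun _ _ => Red.weight_eq hR

lemma wt_le_of_reflTransGen_red (h : ReflTransGen (Red R) D E) {a : A} (ha : Terminal R a) :
    wt D a ≤ wt E a := by
  simpa [reflTransGen_eq_self] using h.lift (wt · a) fun _ _ hs => hs.wt_le_of_terminal ha

end Invariants

end PPARS

open PPARS Relation in
/-- If `D ↠* E` then the L¹ distance between `D` and `E` is at most twice the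
liveness of `D`. -/
theorem dist_le_two_liv {A : Type} (R : A → PDist A → Prop) (hR : IsPARS R)
    {D E : PDist A} (h : ReflTransGen (Red R) D E) :
    ldist D E ≤ 2 * (liv R D : ℝ) := by
  classical
  set S : Finset A := ((D ++ E).map Prod.snd).toFinset
  have hD : ∀ pa ∈ D, pa.2 ∈ S := fun pa hpa =>
    List.mem_toFinset.2 (List.mem_map_of_mem (List.mem_append_left E hpa))
  have hE : ∀ pa ∈ E, pa.2 ∈ S := fun pa hpa =>
    List.mem_toFinset.2 (List.mem_map_of_mem (List.mem_append_right D hpa))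
  have hweight : ∑ a ∈ S, (wt D a : ℝ) = ∑ a ∈ S, (wt E a : ℝ) := by
    exact_mod_cast (weight_eq_sum_wt hD).symm.trans
      ((weight_eq_of_reflTransGen_red hR h).trans (weight_eq_sum_wt hE))
  calc ldist D E = ∑ a ∈ S, |(wt D a : ℝ) - wt E a| := ldist_eq_sum hD hE
    _ ≤ 2 * ∑ a ∈ S, if Terminal R a then 0 else (wt D a : ℝ) :=
        S.sum_abs_sub_le_two_mul_sum_ite _ (fun _ => NNReal.coe_nonneg _)
          (fun _ => NNReal.coe_nonneg _) hweight
          fun a ha => NNReal.coe_le_coe.2 (wt_le_of_reflTransGen_red h ha)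
    _ = 2 * (liv R D : ℝ) := by simp [liv_eq_sum_wt R hD, apply_ite]
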